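/- Let N ≥ 1 and let a, x ∈ ℝ^N. Define the half-sample symmetric extension x_e ∈ ℝ^{2N} of x by x_e[n] = x[n] for 0 ≤ n ≤ N−1 and x_e[n] = x[2N−1−n] for N ≤ n ≤ 2N−1, and define the whole-sample symmetric kernel extension a_e ∈ ℝ^{2N} of a by a_e[0] = a[0], a_e[m] = a[m] and a_e[2N−m] = a[m] for 1 ≤ m ≤ N−1, and a_e[N] = 0. Define the symmetric convolution y = a *_s x ∈ ℝ^N by y[n] = Σ_{m=0}^{2N−1} a_e[m] · x_e[(n − m) mod 2N] for 0 ≤ n ≤ N−1. Then for every 0 ≤ k ≤ N−1, the unnormalized type-II DCT of y satisfies Y[k] = Â[k] · X[k], where X[k] = Σ_{n=0}^{N−1} x[n] cos(π(n+1/2)k/N), Y[k] = Σ_{n=0}^{N−1} y[n] cos(π(n+1/2)k/N), and Â[k] = a[0] + 2 Σ_{n=1}^{N−1} a[n] cos(πnk/N). (DCT convolution theorem: symmetric convolution in the space domain is equivalent to element-wise multiplication in the DCT domain.) -/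

import Mathlib

/-!
Index the extended signals by `ZMod (2N)`, so that the symmetric convolution is an honest circular
convolution and shifting the summation variable is a bijection. The function
`c t = cos (π t k / N)` is even, `2N`-periodic and satisfies `c (t + s) + c (t - s) = 2 c t c s`.
Shifting by `m` and averaging the terms `m` and `-m` (the kernel extension is even) shows that,
over a full period, `∑ⱼ (aₑ ∗ xₑ) j c (j + ½) = (∑ₘ aₑ m c m) ∑ⱼ xₑ j c (j + ½)`. The maps
`xₑ`, `aₑ ∗ xₑ` and `c (· + ½)` are invariant under `j ↦ -1 - j`, so each full-period sum is twice
the corresponding sum over `0 ≤ n < N`, and `∑ₘ aₑ m c m` folds to `a 0 + 2 ∑_{1 ≤ m < N} a m c m`.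
-/

open Finset

namespace ZMod

theorem sum_eq_sum_range {M : Type*} [AddCommMonoid M] {n : ℕ} [NeZero n] (f : ZMod n → M) :
    ∑ j, f j = ∑ i ∈ range n, f i :=
  sum_nbij' val (fun i => i) (fun j _ => mem_range.2 j.val_lt) (fun _ _ => mem_univ _)
    (fun j _ => natCast_zmod_val j) (fun _ hi => val_natCast_of_lt (mem_range.1 hi))
    (fun j _ => by rw [natCast_zmod_val])

theorem val_neg_one_sub {n : ℕ} [NeZero n] (j : ZMod n) : (-1 - j).val = n - 1 - j.val := by
  have hj := j.val_lt
  have : -1 - j = ((n - 1 - j.val : ℕ) : ZMod n) := by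
    rw [Nat.cast_sub (by omega), Nat.cast_sub (by omega), natCast_self, natCast_zmod_val]
    push_cast; ring
  rw [this, val_natCast_of_lt (by omega)]

variable {M : Type*} [AddCommMonoid M] {N : ℕ} [NeZero N]

theorem sum_eq_sum_range_add_neg_one_sub (F : ZMod (2 * N) → M) :
    ∑ j, F j = ∑ n ∈ range N, (F n + F (-1 - n)) := by
  have hreflect : ∀ i < N,
      ((N + i : ℕ) : ZMod (2 * N)) = -1 - ((N - 1 - i : ℕ) : ZMod (2 * N)) := fun i hi => by
    rw [eq_sub_iff_add_eq, eq_neg_iff_add_eq_zero, ← Nat.cast_add, ← Nat.cast_add_one,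
      show N + i + (N - 1 - i) + 1 = 2 * N by omega, natCast_self]
  rw [sum_eq_sum_range, show range (2 * N) = range (N + N) by rw [two_mul], sum_range_add,
    sum_add_distrib, ← sum_range_reflect (fun i => F (-1 - (i : ZMod (2 * N)))) N]
  congr 1
  exact sum_congr rfl fun i hi => by rw [hreflect i (mem_range.1 hi)]

theorem sum_eq_add_sum_Ico_add_neg (F : ZMod (2 * N) → M) :
    ∑ j, F j = F 0 + F N + ∑ m ∈ Ico 1 N, (F m + F (-m)) := by
  have hN : 1 ≤ N := Nat.one_le_iff_ne_zero.2 (NeZero.ne N)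
  have hneg : ∀ m ∈ Ico 1 N, ((2 * N - m : ℕ) : ZMod (2 * N)) = -m := fun m hm => by
    rw [Nat.cast_sub (by simp at hm; omega), natCast_self, zero_sub]
  rw [sum_eq_sum_range, range_eq_Ico,
    ← sum_Ico_consecutive _ (Nat.zero_le N) (by omega : N ≤ 2 * N),
    ← sum_Ico_consecutive _ (Nat.zero_le 1) hN, sum_eq_sum_Ico_succ_bot (by omega : N < 2 * N),
    show Ico (N + 1) (2 * N) = Ico (2 * N + 1 - N) (2 * N + 1 - 1) by
      rw [show 2 * N + 1 - N = N + 1 by omega, Nat.add_sub_cancel],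
    ← sum_Ico_reflect (fun k => F k) 1 (by omega : N ≤ 2 * N + 1), sum_add_distrib]
  simp only [Nat.Ico_succ_singleton, sum_singleton, Nat.cast_zero]
  rw [sum_congr rfl fun m hm => congrArg F (hneg m hm)]
  abel

end ZMod

section CircConv

variable {α R : Type*} [AddCommGroup α] [Fintype α]

def circConv [NonUnitalNonAssocSemiring R] (A G : α → R) (j : α) : R := ∑ m, A m * G (j - m)

theorem circConv_reflect [NonUnitalNonAssocSemiring R] {A G : α → R} (hA : ∀ m, A (-m) = A m)
    {r : α} (hG : ∀ j, G (r - j) = G j) (j : α) : circConv A G (r - j) = circConv A G j := by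
  unfold circConv
  rw [← Equiv.sum_comp (Equiv.neg α)]
  refine sum_congr rfl fun m _ => ?_
  rw [Equiv.neg_apply, hA, ← hG (j - m)]
  congr 2
  abel

theorem sum_circConv_mul [CommRing R] [IsDomain R] [CharZero R] {A : α → R}
    (hA : ∀ m, A (-m) = A m) (G : α → R) {C D : α → R}
    (hCD : ∀ j m, C (j + m) + C (j - m) = 2 * C j * D m) :
    ∑ j, circConv A G j * C j = (∑ m, A m * D m) * ∑ j, G j * C j := by
  set F : α → R := fun m => ∑ j, G j * C (j + m)
  have hshift : ∑ j, circConv A G j * C j = ∑ m, A m * F m := by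
    simp only [circConv, sum_mul, F, mul_sum]
    rw [sum_comm]
    refine sum_congr rfl fun m _ => ?_
    rw [← Equiv.sum_comp (Equiv.addRight m)]
    refine sum_congr rfl fun j _ => ?_
    simp only [Equiv.coe_addRight, add_sub_cancel_right]
    ring
  have hneg : ∑ m, A m * F m = ∑ m, A m * F (-m) := by
    rw [← Equiv.sum_comp (Equiv.neg α)]
    simp only [Equiv.neg_apply, hA]
  have hpair : ∀ m, F m + F (-m) = 2 * D m * ∑ j, G j * C j := fun m => by
    simp only [F, ← sum_add_distrib, mul_sum, ← sub_eq_add_neg, ← mul_add, hCD]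
    exact sum_congr rfl fun j _ => by ring
  refine mul_left_cancel₀ (two_ne_zero (α := R)) ?_
  calc 2 * ∑ j, circConv A G j * C j = ∑ m, A m * (F m + F (-m)) := by
        rw [hshift, two_mul]
        nth_rewrite 2 [hneg]
        simp only [← sum_add_distrib, mul_add]
    _ = 2 * ((∑ m, A m * D m) * ∑ j, G j * C j) := by
        simp only [hpair]
        rw [sum_mul, mul_sum]
        exact sum_congr rfl fun m _ => by ring

end CircConv

theorem circConv_natCast {R : Type*} [NonUnitalNonAssocSemiring R] {N : ℕ} [NeZero N]
    (a x : ℕ → R) (n : ℕ) :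
    circConv (fun m : ZMod N => a m.val) (fun j => x j.val) n =
      ∑ m ∈ range N, a m * x ((n + N - m) % N) := by
  rw [circConv, ZMod.sum_eq_sum_range]
  refine sum_congr rfl fun m hm => ?_
  have hm := mem_range.1 hm
  rw [ZMod.val_natCast_of_lt hm, ← ZMod.val_natCast,
    Nat.cast_sub (by omega), Nat.cast_add, ZMod.natCast_self, add_zero]

namespace Function.Periodic

variable {n : ℕ} [NeZero n] {f : ℝ → ℝ}

theorem zmod_val_intCast_add (hf : Periodic f n) (i : ℤ) (s : ℝ) :
    f (((i : ZMod n).val : ℝ) + s) = f (i + s) := by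
  have hval : (((i : ZMod n).val : ℕ) : ℝ) = i - (i / n : ℤ) * n := by
    rw [← Int.cast_natCast, ZMod.val_intCast, Int.emod_def]
    push_cast; ring
  rw [hval, sub_add_eq_add_sub, hf.sub_int_mul_eq]

theorem zmod_val_neg (hf : Periodic f n) (heven : Function.Even f) (m : ZMod n) :
    f (-m).val = f m.val := by
  have := hf.zmod_val_intCast_add (-m.val) 0
  push_cast [ZMod.natCast_zmod_val, add_zero] at this
  rw [this, heven]

theorem zmod_val_neg_one_sub_add_half (hf : Periodic f n) (heven : Function.Even f)
    (j : ZMod n) : f ((-1 - j).val + 1 / 2) = f (j.val + 1 / 2) := by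
  have := hf.zmod_val_intCast_add (-1 - j.val) (1 / 2)
  push_cast [ZMod.natCast_zmod_val] at this
  rw [this, ← heven]
  ring_nf

theorem zmod_val_add_add_zmod_val_sub (hf : Periodic f n)
    (hadd : ∀ t s, f (t + s) + f (t - s) = 2 * f t * f s) (s : ℝ) (j m : ZMod n) :
    f ((j + m).val + s) + f ((j - m).val + s) = 2 * f (j.val + s) * f m.val := by
  have h₁ := hf.zmod_val_intCast_add (j.val + m.val) s
  have h₂ := hf.zmod_val_intCast_add (j.val - m.val) s
  push_cast [ZMod.natCast_zmod_val] at h₁ h₂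
  rw [h₁, h₂, ← hadd]
  ring_nf

end Function.Periodic

section SymmetricExtension

variable {β : Type*} {N : ℕ} [NeZero N]

theorem halfSample_reflect {x xe : ℕ → β} (hxe₁ : ∀ n, n < N → xe n = x n)
    (hxe₂ : ∀ n, N ≤ n → n < 2 * N → xe n = x (2 * N - 1 - n)) (j : ZMod (2 * N)) :
    xe (-1 - j).val = xe j.val := by
  have hj := j.val_lt
  rw [ZMod.val_neg_one_sub]
  rcases lt_or_ge j.val N with h | h
  · rw [hxe₂ _ (by omega) (by omega), hxe₁ _ h]
    congr 1
    omega
  · rw [hxe₁ _ (by omega), hxe₂ _ h hj]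

theorem wholeSample_neg {a ae : ℕ → β} (hae₁ : ∀ m, 1 ≤ m → m ≤ N - 1 → ae m = a m)
    (hae₂ : ∀ m, 1 ≤ m → m ≤ N - 1 → ae (2 * N - m) = a m) (m : ZMod (2 * N)) :
    ae (-m).val = ae m.val := by
  have hm := m.val_lt
  rw [ZMod.neg_val]
  split_ifs with h
  · rw [h, ZMod.val_zero]
  have hm0 : m.val ≠ 0 := (ZMod.val_ne_zero m).2 h
  rcases lt_trichotomy m.val N with hlt | heq | hgt
  · rw [hae₂ _ (by omega) (by omega), hae₁ _ (by omega) (by omega)]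
  · rw [heq, show 2 * N - N = N by omega]
  · rw [hae₁ _ (by omega) (by omega), ← hae₂ (2 * N - m.val) (by omega) (by omega),
      show 2 * N - (2 * N - m.val) = m.val by omega]

end SymmetricExtension

theorem sum_range_circConv_mul {R : Type*} [CommRing R] [IsDomain R] [CharZero R] {N : ℕ}
    [NeZero N] {A G C D : ZMod (2 * N) → R} (hA : ∀ m, A (-m) = A m)
    (hG : ∀ j, G (-1 - j) = G j) (hC : ∀ j, C (-1 - j) = C j)
    (hCD : ∀ j m, C (j + m) + C (j - m) = 2 * C j * D m) :
    ∑ n ∈ range N, circConv A G n * C n = (∑ m, A m * D m) * ∑ n ∈ range N, G n * C n := by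
  have hhalf : ∀ F : ZMod (2 * N) → R, (∀ j, F (-1 - j) = F j) →
      ∑ j, F j = 2 * ∑ n ∈ range N, F n := fun F hF => by
    simp only [ZMod.sum_eq_sum_range_add_neg_one_sub, hF, ← two_mul, mul_sum]
  refine mul_left_cancel₀ (two_ne_zero (α := R)) ?_
  rw [← hhalf (fun j => circConv A G j * C j) fun j => by rw [circConv_reflect hA hG, hC],
    sum_circConv_mul hA G hCD, hhalf (fun j => G j * C j) fun j => by rw [hG, hC]]
  ring

section DCT

variable (N k : ℕ)

noncomputable def dctCos (t : ℝ) : ℝ := Real.cos (Real.pi * t * k / N)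

theorem dctCos_periodic [NeZero N] : Function.Periodic (dctCos N k) (2 * N : ℕ) := fun t => by
  have hN : (N : ℝ) ≠ 0 := Nat.cast_ne_zero.2 (NeZero.ne N)
  rw [dctCos, dctCos, ← Real.cos_add_nat_mul_two_pi (Real.pi * t * k / N) k]
  congr 1
  field_simp
  push_cast
  ring

theorem dctCos_zero : dctCos N k 0 = 1 := by
  simp [dctCos]

theorem dctCos_even : Function.Even (dctCos N k) := fun t => by
  rw [dctCos, dctCos, ← Real.cos_neg]
  ring_nf

theorem dctCos_add_add_dctCos_sub (t s : ℝ) :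
    dctCos N k (t + s) + dctCos N k (t - s) = 2 * dctCos N k t * dctCos N k s := by
  simp only [dctCos]
  rw [show Real.pi * (t + s) * k / N = Real.pi * t * k / N + Real.pi * s * k / N by ring,
    show Real.pi * (t - s) * k / N = Real.pi * t * k / N - Real.pi * s * k / N by ring,
    Real.cos_add, Real.cos_sub]
  ring

end DCT

theorem sum_wholeSample_mul {R : Type*} [CommSemiring R] {N : ℕ} [NeZero N] {a ae : ℕ → R}
    {D : ZMod (2 * N) → R} (hD : ∀ m, D (-m) = D m) (hae₀ : ae 0 = a 0)
    (hae₁ : ∀ m, 1 ≤ m → m ≤ N - 1 → ae m = a m)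
    (hae₂ : ∀ m, 1 ≤ m → m ≤ N - 1 → ae (2 * N - m) = a m) (haeN : ae N = 0) :
    ∑ m : ZMod (2 * N), ae m.val * D m = a 0 * D 0 + 2 * ∑ m ∈ Ico 1 N, a m * D m := by
  have hN : 1 ≤ N := Nat.one_le_iff_ne_zero.2 (NeZero.ne N)
  rw [ZMod.sum_eq_add_sum_Ico_add_neg, mul_sum]
  simp only [wholeSample_neg hae₁ hae₂, hD, ZMod.val_zero, hae₀,
    ZMod.val_natCast_of_lt (by omega : N < 2 * N), haeN, zero_mul, add_zero]
  congr 1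
  refine sum_congr rfl fun m hm => ?_
  have hm := mem_Ico.1 hm
  rw [ZMod.val_natCast_of_lt (by omega), hae₁ m hm.1 (by omega)]
  ring

theorem dct_convolution_theorem_general
    (N : ℕ) (hN : 1 ≤ N) (a x xe ae y : ℕ → ℝ)
    -- half-sample symmetric extension of `x`
    (hxe₁ : ∀ n, n < N → xe n = x n)
    (hxe₂ : ∀ n, N ≤ n → n < 2 * N → xe n = x (2 * N - 1 - n))
    -- whole-sample symmetric extension of the kernel `a`
    (hae₀ : ae 0 = a 0)
    (hae₁ : ∀ m, 1 ≤ m → m ≤ N - 1 → ae m = a m)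
    (hae₂ : ∀ m, 1 ≤ m → m ≤ N - 1 → ae (2 * N - m) = a m)
    (haeN : ae N = 0)
    -- symmetric convolution `y = a *_s x`, a 2N-periodic circular convolution
    (hy : ∀ n, n < N →
      y n = ∑ m ∈ range (2 * N), ae m * xe ((n + 2 * N - m) % (2 * N)))
    (k : ℕ) :
    (∑ n ∈ range N, y n * Real.cos (Real.pi * ((n : ℝ) + 1 / 2) * (k : ℝ) / (N : ℝ))) =
      ((a 0 + 2 * ∑ n ∈ Finset.Ico 1 N, a n * Real.cos (Real.pi * (n : ℝ) * (k : ℝ) / (N : ℝ))) *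
        (∑ n ∈ range N, x n * Real.cos (Real.pi * ((n : ℝ) + 1 / 2) * (k : ℝ) / (N : ℝ)))) := by
  have : NeZero N := ⟨by omega⟩
  have hper := dctCos_periodic N k
  have key := sum_range_circConv_mul (A := fun m => ae m.val) (G := fun j => xe j.val)
    (C := fun j => dctCos N k (j.val + 1 / 2)) (D := fun m => dctCos N k m.val)
    (wholeSample_neg hae₁ hae₂) (halfSample_reflect hxe₁ hxe₂)
    (hper.zmod_val_neg_one_sub_add_half (dctCos_even N k))
    (hper.zmod_val_add_add_zmod_val_sub (dctCos_add_add_dctCos_sub N k) (1 / 2))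
  rw [sum_wholeSample_mul (hper.zmod_val_neg (dctCos_even N k)) hae₀ hae₁ hae₂ haeN] at key
  change ∑ n ∈ range N, y n * dctCos N k (n + 1 / 2) =
    (a 0 + 2 * ∑ n ∈ Ico 1 N, a n * dctCos N k n) * ∑ n ∈ range N, x n * dctCos N k (n + 1 / 2)
  have hval : ∀ n < N, (n : ZMod (2 * N)).val = n := fun n hn => ZMod.val_natCast_of_lt (by omega)
  calc ∑ n ∈ range N, y n * dctCos N k (n + 1 / 2)
      = ∑ n ∈ range N, circConv (fun m : ZMod (2 * N) => ae m.val) (fun j => xe j.val) n *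
          dctCos N k ((n : ZMod (2 * N)).val + 1 / 2) :=
        sum_congr rfl fun n hn => by
          rw [hy n (mem_range.1 hn), circConv_natCast, hval n (mem_range.1 hn)]
    _ = _ := key
    _ = _ := by
      congr 1
      · rw [ZMod.val_zero, Nat.cast_zero, dctCos_zero, mul_one]
        congr 2
        exact sum_congr rfl fun m hm => by rw [hval m (mem_Ico.1 hm).2]
      · exact sum_congr rfl fun n hn => by rw [hval n (mem_range.1 hn), hxe₁ n (mem_range.1 hn)]

/-- **DCT convolution theorem.** Symmetric convolution in the space domain is
equivalent to element-wise multiplication in the (unnormalized type-II) DCT domain. -/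
theorem dct_convolution_theorem
    (N : ℕ) (hN : 1 ≤ N) (a x xe ae y : ℕ → ℝ)
    -- half-sample symmetric extension of `x`
    (hxe₁ : ∀ n, n < N → xe n = x n)
    (hxe₂ : ∀ n, N ≤ n → n < 2 * N → xe n = x (2 * N - 1 - n))
    -- whole-sample symmetric extension of the kernel `a`
    (hae₀ : ae 0 = a 0)
    (hae₁ : ∀ m, 1 ≤ m → m ≤ N - 1 → ae m = a m)
    (hae₂ : ∀ m, 1 ≤ m → m ≤ N - 1 → ae (2 * N - m) = a m)
    (haeN : ae N = 0)
    -- symmetric convolution `y = a *_s x`, a 2N-periodic circular convolution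
    (hy : ∀ n, n < N →
      y n = ∑ m ∈ range (2 * N), ae m * xe ((n + 2 * N - m) % (2 * N)))
    (k : ℕ) (hk : k < N) :
    (∑ n ∈ range N, y n * Real.cos (Real.pi * ((n : ℝ) + 1 / 2) * (k : ℝ) / (N : ℝ))) =
      ((a 0 + 2 * ∑ n ∈ Finset.Ico 1 N, a n * Real.cos (Real.pi * (n : ℝ) * (k : ℝ) / (N : ℝ))) *
        (∑ n ∈ range N, x n * Real.cos (Real.pi * ((n : ℝ) + 1 / 2) * (k : ℝ) / (N : ℝ)))) :=
  dct_convolution_theorem_general N hN a x xe ae y hxe₁ hxe₂ hae₀ hae₁ hae₂ haeN hy k
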